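/- arXiv:2208.08191 — 7 statements merged into one kernel-verified Lean document; each statement's English description precedes it below -/
import Mathlib

section
/- Hadamard-power bound: for any function f : 𝒳^M × 𝒳^M → ℝ^{n×m} with sep(f) = k_f and every k ∈ ℕ, sep(f^{⊙k}) ≤ C(k + k_f − 1, k) (the binomial coefficient); in particular sep(f^{⊙2}) ≤ C(k_f + 1, 2). -/
open scoped BigOperators

/-- Separation rank of a scalar-valued function of two groups of variables. -/
noncomputable def sepRank {𝒳 : Type*} {M : ℕ}
    (y : (Fin M → 𝒳) → (Fin M → 𝒳) → ℝ) : ℕ∞ :=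
  sInf {R : ℕ∞ | ∃ r : ℕ, R = (r : ℕ∞) ∧ ∃ g g' : Fin r → (Fin M → 𝒳) → ℝ,
    ∀ A B, y A B = ∑ i, g i A * g' i B}

/-- Separation rank of a matrix-valued function: maximum over output entries. -/
noncomputable def sepRankM {𝒳 : Type*} {M n m : ℕ}
    (f : (Fin M → 𝒳) → (Fin M → 𝒳) → Matrix (Fin n) (Fin m) ℝ) : ℕ∞ :=
  ⨆ i : Fin n, ⨆ j : Fin m, sepRank (fun A B => f A B i j)

/-!
Write an entry as `y A B = ∑_{i < r} g_i(A) g'_i(B)`. Expanding `y^k` by the multinomial theorem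
and grouping the terms by the multiset `σ` of indices that occur, `y^k` is a sum over
`σ ∈ Sym (Fin r) k` of the separated terms `(countPerms σ · ∏_{i ∈ σ} g_i(A)) · ∏_{i ∈ σ} g'_i(B)`.
There are `(r + k - 1).choose k` such multisets.
-/

section SeparationRank

variable {𝒳 : Type*} {M : ℕ} {y : (Fin M → 𝒳) → (Fin M → 𝒳) → ℝ}

lemma sepRank_le_card {ι : Type*} [Fintype ι] (g g' : ι → (Fin M → 𝒳) → ℝ)
    (h : ∀ A B, y A B = ∑ i, g i A * g' i B) :
    sepRank y ≤ Fintype.card ι := by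
  let e : Fin (Fintype.card ι) ≃ ι := (Fintype.equivFin ι).symm
  refine sInf_le ⟨_, rfl, fun i => g (e i), fun i => g' (e i), fun A B => ?_⟩
  rw [h A B]
  exact (e.sum_comp fun i => g i A * g' i B).symm

lemma exists_sum_of_sepRank_le {k : ℕ} (h : sepRank y ≤ k) :
    ∃ r ≤ k, ∃ g g' : Fin r → (Fin M → 𝒳) → ℝ, ∀ A B, y A B = ∑ i, g i A * g' i B := by
  obtain ⟨_, hmem, -⟩ := sInf_lt_iff.mp (h.trans_lt (ENat.natCast_lt_top k))
  obtain ⟨r, hr, g, g', hy⟩ := csInf_mem ⟨_, hmem⟩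
  exact ⟨r, by exact_mod_cast (hr ▸ h : (r : ℕ∞) ≤ k), g, g', hy⟩

lemma sum_mul_pow_eq_sum_sym {α ι R : Type*} [Fintype ι] [DecidableEq ι] [CommSemiring R]
    (a b : ι → α → R) (x x' : α) (k : ℕ) :
    (∑ i, a i x * b i x') ^ k =
      ∑ σ : Sym ι k, (σ.1.countPerms * (σ.1.map (a · x)).prod) * (σ.1.map (b · x')).prod := by
  rw [Finset.sum_pow, Finset.sym_univ]
  refine Finset.sum_congr rfl fun σ _ => ?_
  rw [mul_assoc, Multiset.prod_map_mul]

lemma sepRank_pow_le {r : ℕ} (h : sepRank y ≤ r) (k : ℕ) :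
    sepRank (fun A B => y A B ^ k) ≤ (r + k - 1).choose k := by
  classical
  obtain ⟨s, hs, g, g', hy⟩ := exists_sum_of_sepRank_le h
  calc sepRank (fun A B => y A B ^ k)
      ≤ Fintype.card (Sym (Fin s) k) :=
        sepRank_le_card _ _ fun A B => by rw [hy, sum_mul_pow_eq_sum_sym]
    _ ≤ (r + k - 1).choose k := by
        rw [Sym.card_sym_eq_choose, Fintype.card_fin]
        exact_mod_cast Nat.choose_le_choose k (by omega)

end SeparationRank

lemma sepRank_le_sepRankM {𝒳 : Type*} {M n m : ℕ}
    (f : (Fin M → 𝒳) → (Fin M → 𝒳) → Matrix (Fin n) (Fin m) ℝ) (i : Fin n) (j : Fin m) :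
    sepRank (fun A B => f A B i j) ≤ sepRankM f :=
  le_iSup₂_of_le i j le_rfl

/-- Hadamard-power bound on the separation rank. -/
theorem sepRank_hadamard_pow {𝒳 : Type*} {M n m : ℕ}
    (f : (Fin M → 𝒳) → (Fin M → 𝒳) → Matrix (Fin n) (Fin m) ℝ)
    (k_f : ℕ) (hf : sepRankM f = (k_f : ℕ∞)) :
    (∀ k : ℕ,
      sepRankM (fun A B => Matrix.of fun i j => (f A B i j) ^ k)
        ≤ ((k + k_f - 1).choose k : ℕ∞)) ∧
    sepRankM (fun A B => Matrix.of fun i j => (f A B i j) ^ 2)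
        ≤ ((k_f + 1).choose 2 : ℕ∞) := by
  have hpow : ∀ k : ℕ,
      sepRankM (fun A B => Matrix.of fun i j => (f A B i j) ^ k)
        ≤ ((k + k_f - 1).choose k : ℕ∞) := fun k =>
    iSup₂_le fun i j => by
      simpa [add_comm k] using sepRank_pow_le (hf ▸ sepRank_le_sepRankM f i j) k
  refine ⟨hpow, ?_⟩
  simpa [add_comm k_f] using hpow 2
end

section
/- MLP-mixer separation-rank upper bound (Theorem 5.3): let X₀ : 𝒳^M × 𝒳^M → ℝ^{n×n} satisfy sep(X₀) ≤ 2, and for i = 1,…,p let L_i be a mixer layer of the form (L_i ∘ Y)(A,B) = τ_i( (W_i · π_i(Y(A,B)))^{⊙2} ) + c_i · ρ_i(Y(A,B)) with fixed W_i ∈ ℝ^{n×n}, entry permutations τ_i, π_i, ρ_i, and c_i ∈ {0, 1}. Then the depth-p network T := L_p ∘ ⋯ ∘ L_1 ∘ X₀ satisfies sep(T) ≤ (2n² + 2)^{2^p}; in particular log sep(T) grows at most like a constant times 2^p. -/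
open scoped BigOperators

/-- Permute the entries of an `n × m` matrix according to a permutation of positions. -/
def permEntries {n m : ℕ} (σ : Equiv.Perm (Fin n × Fin m))
    (X : Matrix (Fin n) (Fin m) ℝ) : Matrix (Fin n) (Fin m) ℝ :=
  Matrix.of fun i j => X (σ (i, j)).1 (σ (i, j)).2

/-- A general MLP-mixer layer: permute, apply a weight matrix, square entrywise
(the σ₂ activation), permute again, and optionally add a permuted residual copy. -/
noncomputable def mixLayer {n : ℕ} (W : Matrix (Fin n) (Fin n) ℝ)
    (τ π ρ : Equiv.Perm (Fin n × Fin n)) (c : ℝ)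
    (Y : Matrix (Fin n) (Fin n) ℝ) : Matrix (Fin n) (Fin n) ℝ :=
  permEntries τ (Matrix.of fun i j => ((W * permEntries π Y) i j) ^ 2)
    + c • permEntries ρ Y

/-!
Separation rank is subadditive, submultiplicative and not increased by scalar factors. An entry
of a mixer layer is the square of a linear combination of `n` entries of its input plus a multiple
of one further entry, so a bound `s` on the separation rank of the input entries becomes
`n² s² + s`. As `s ≤ s²`, the quantity `(n² + 1) s` is at most squared by every layer, and it
starts at `2 (n² + 1)`.
-/

def HasSepExpansion {α β R : Type*} [CommSemiring R] (y : α → β → R) (r : ℕ) : Prop :=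
  ∃ g : Fin r → α → R, ∃ g' : Fin r → β → R, ∀ a b, y a b = ∑ i, g i a * g' i b

namespace HasSepExpansion

variable {α β R : Type*} [CommSemiring R] {y z : α → β → R} {r s : ℕ}

theorem zero (r : ℕ) : HasSepExpansion (0 : α → β → R) r :=
  ⟨0, 0, fun _ _ => by simp⟩

theorem one : HasSepExpansion (1 : α → β → R) 1 :=
  ⟨1, 1, fun _ _ => by simp⟩

theorem add (hy : HasSepExpansion y r) (hz : HasSepExpansion z s) :
    HasSepExpansion (y + z) (r + s) := by
  obtain ⟨g, g', hg⟩ := hy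
  obtain ⟨h, h', hh⟩ := hz
  exact ⟨Fin.append g h, Fin.append g' h', fun a b => by simp [hg, hh, Fin.sum_univ_add]⟩

theorem mono (hy : HasSepExpansion y r) (hrs : r ≤ s) : HasSepExpansion y s := by
  obtain ⟨k, rfl⟩ := Nat.exists_eq_add_of_le hrs
  simpa using hy.add (zero k)

theorem mul (hy : HasSepExpansion y r) (hz : HasSepExpansion z s) :
    HasSepExpansion (y * z) (r * s) := by
  obtain ⟨g, g', hg⟩ := hy
  obtain ⟨h, h', hh⟩ := hz
  refine ⟨fun i a => g (finProdFinEquiv.symm i).1 a * h (finProdFinEquiv.symm i).2 a,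
    fun i b => g' (finProdFinEquiv.symm i).1 b * h' (finProdFinEquiv.symm i).2 b,
    fun a b => ?_⟩
  rw [Pi.mul_apply, Pi.mul_apply, hg, hh, Finset.sum_mul_sum, ← Finset.sum_product',
    ← finProdFinEquiv.sum_comp]
  simp only [Equiv.symm_apply_apply]
  exact Finset.sum_congr rfl fun _ _ => by ring

theorem pow (hy : HasSepExpansion y r) (k : ℕ) : HasSepExpansion (y ^ k) (r ^ k) := by
  induction k with
  | zero => simpa using one
  | succ k ih => simpa only [pow_succ] using ih.mul hy

theorem const_smul (hy : HasSepExpansion y r) (w : R) : HasSepExpansion (w • y) r := by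
  obtain ⟨g, g', hg⟩ := hy
  exact ⟨fun i a => w * g i a, g', fun a b => by simp [hg, Finset.mul_sum, mul_assoc]⟩

theorem sum {ι : Type*} (t : Finset ι) {f : ι → α → β → R} {r : ι → ℕ}
    (hf : ∀ k ∈ t, HasSepExpansion (f k) (r k)) :
    HasSepExpansion (∑ k ∈ t, f k) (∑ k ∈ t, r k) := by
  induction t using Finset.cons_induction with
  | empty => simpa using zero 0
  | cons k t _ ih =>
    simp only [Finset.sum_cons]
    exact (hf k (t.mem_cons_self k)).add (ih fun j hj => hf j (Finset.mem_cons_of_mem hj))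

end HasSepExpansion

section

variable {𝒳 : Type*} {M : ℕ}

theorem sepRank_le_natCast_iff {y : (Fin M → 𝒳) → (Fin M → 𝒳) → ℝ} {r : ℕ} :
    sepRank y ≤ r ↔ HasSepExpansion y r := by
  refine ⟨fun h => ?_, fun h => sInf_le ⟨r, rfl, h⟩⟩
  obtain ⟨_, ⟨r', rfl, hr'⟩, hlt⟩ :=
    sInf_lt_iff.mp (h.trans_lt (ENat.natCast_lt_natCast.mpr r.lt_succ_self))
  exact HasSepExpansion.mono hr' (Nat.lt_succ_iff.mp (ENat.natCast_lt_natCast.mp hlt))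

theorem sepRankM_le_natCast_iff {n m : ℕ}
    {f : (Fin M → 𝒳) → (Fin M → 𝒳) → Matrix (Fin n) (Fin m) ℝ} {r : ℕ} :
    sepRankM f ≤ r ↔ ∀ i j, HasSepExpansion (fun A B => f A B i j) r := by
  simp only [sepRankM, iSup_le_iff, sepRank_le_natCast_iff]

theorem mixLayer_apply {n : ℕ} (W : Matrix (Fin n) (Fin n) ℝ)
    (τ π ρ : Equiv.Perm (Fin n × Fin n)) (c : ℝ) (Y : Matrix (Fin n) (Fin n) ℝ)
    (a b : Fin n) :
    mixLayer W τ π ρ c Y a b =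
      (∑ k, W (τ (a, b)).1 k * Y (π (k, (τ (a, b)).2)).1 (π (k, (τ (a, b)).2)).2) ^ 2
        + c * Y (ρ (a, b)).1 (ρ (a, b)).2 := by
  simp [mixLayer, permEntries, Matrix.mul_apply]

theorem hasSepExpansion_mixLayer {n s : ℕ} (W : Matrix (Fin n) (Fin n) ℝ)
    (τ π ρ : Equiv.Perm (Fin n × Fin n)) (c : ℝ)
    {Y : (Fin M → 𝒳) → (Fin M → 𝒳) → Matrix (Fin n) (Fin n) ℝ}
    (hY : ∀ i j, HasSepExpansion (fun A B => Y A B i j) s) (a b : Fin n) :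
    HasSepExpansion (fun A B => mixLayer W τ π ρ c (Y A B) a b) (n ^ 2 * s ^ 2 + s) := by
  have hlin := HasSepExpansion.sum Finset.univ fun k _ =>
    (hY (π (k, (τ (a, b)).2)).1 (π (k, (τ (a, b)).2)).2).const_smul (W (τ (a, b)).1 k)
  have h := ((hlin.pow 2).add ((hY (ρ (a, b)).1 (ρ (a, b)).2).const_smul c))
  simp only [Finset.sum_const, Finset.card_univ, Fintype.card_fin, smul_eq_mul] at h
  convert h using 1
  · ext A B
    simp [mixLayer_apply]
  · ring

end

theorem sepRank_mixer_network_general {𝒳 : Type*} {M n : ℕ} (p : ℕ)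
    (W : ℕ → Matrix (Fin n) (Fin n) ℝ)
    (τ π ρ : ℕ → Equiv.Perm (Fin n × Fin n))
    (c : ℕ → ℝ)
    (F : ℕ → (Fin M → 𝒳) → (Fin M → 𝒳) → Matrix (Fin n) (Fin n) ℝ)
    (h0 : sepRankM (F 0) ≤ 2)
    (hstep : ∀ i < p,
      F (i + 1) = fun A B => mixLayer (W i) (τ i) (π i) (ρ i) (c i) (F i A B)) :
    sepRankM (F p) ≤ (2 * (n : ℕ∞) ^ 2 + 2) ^ (2 ^ p) := by
  have layerwise : ∀ i ≤ p, ∃ s : ℕ, (n ^ 2 + 1) * s ≤ (2 * n ^ 2 + 2) ^ (2 ^ i) ∧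
      ∀ a b, HasSepExpansion (fun A B => F i A B a b) s := by
    intro i hi
    induction i with
    | zero =>
      exact ⟨2, (by ring : (n ^ 2 + 1) * 2 = _).le,
        sepRankM_le_natCast_iff.mp (by exact_mod_cast h0)⟩
    | succ i ih =>
      obtain ⟨s, hs, hF⟩ := ih (by omega)
      refine ⟨n ^ 2 * s ^ 2 + s, ?_, ?_⟩
      · calc (n ^ 2 + 1) * (n ^ 2 * s ^ 2 + s) ≤ ((n ^ 2 + 1) * s) ^ 2 := by
              nlinarith [Nat.le_self_pow two_ne_zero s]
          _ ≤ ((2 * n ^ 2 + 2) ^ (2 ^ i)) ^ 2 := Nat.pow_le_pow_left hs 2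
          _ = (2 * n ^ 2 + 2) ^ (2 ^ (i + 1)) := by rw [← pow_mul, ← pow_succ]
      · rw [hstep i (by omega)]
        exact hasSepExpansion_mixLayer _ _ _ _ _ hF
  obtain ⟨s, hs, hF⟩ := layerwise p le_rfl
  calc sepRankM (F p) ≤ s := sepRankM_le_natCast_iff.mpr hF
    _ ≤ ((2 * n ^ 2 + 2) ^ (2 ^ p) : ℕ) :=
      Nat.cast_le.mpr ((Nat.le_mul_of_pos_left s (n ^ 2).succ_pos).trans hs)
    _ = (2 * (n : ℕ∞) ^ 2 + 2) ^ (2 ^ p) := by push_cast; rfl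

/-- MLP-mixer separation-rank upper bound (Theorem 5.3).
`F i` is the function computed by the first `i` layers of the network. -/
theorem sepRank_mixer_network {𝒳 : Type*} {M n : ℕ} (p : ℕ)
    (W : ℕ → Matrix (Fin n) (Fin n) ℝ)
    (τ π ρ : ℕ → Equiv.Perm (Fin n × Fin n))
    (c : ℕ → ℝ) (hc : ∀ i, c i = 0 ∨ c i = 1)
    (F : ℕ → (Fin M → 𝒳) → (Fin M → 𝒳) → Matrix (Fin n) (Fin n) ℝ)
    (h0 : sepRankM (F 0) ≤ 2)
    (hstep : ∀ i < p,
      F (i + 1) = fun A B => mixLayer (W i) (τ i) (π i) (ρ i) (c i) (F i A B)) :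
    sepRankM (F p) ≤ (2 * (n : ℕ∞) ^ 2 + 2) ^ (2 ^ p) :=
  sepRank_mixer_network_general p W τ π ρ c F h0 hstep
end

section
/- Separation-rank upper bound for a simple linear transformer (Theorem D.2): let X₀ : 𝒳^M × 𝒳^M → ℝ^{n×n} satisfy sep(X₀) ≤ 2, let d ≥ 2, and for i = 1,…,p let L_i(Y) := (W_{i,d}·Y)·(W_{i,d−1}·Y)⋯(W_{i,1}·Y) with fixed matrices W_{i,j} ∈ ℝ^{n×n}. Then the depth-p composition T := L_p ∘ ⋯ ∘ L_1 ∘ X₀ satisfies sep(T) ≤ (2·n³)^{d^p}; for d = 3 this gives sep(T) ≤ (2n³)^{3^p}. -/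
open scoped BigOperators

/-- A degree-`d` polynomial attention layer: `Y ↦ (W_d Y)(W_{d-1} Y)⋯(W_1 Y)`. -/
def attnLayer {n : ℕ} (d : ℕ) (W : Fin d → Matrix (Fin n) (Fin n) ℝ)
    (Y : Matrix (Fin n) (Fin n) ℝ) : Matrix (Fin n) (Fin n) ℝ :=
  (List.ofFn fun j : Fin d => W j * Y).prod

section Aux

variable {𝒳 : Type*} {M n : ℕ}

/-- `y` admits a separated decomposition with `r` terms. -/
def HasSep (y : (Fin M → 𝒳) → (Fin M → 𝒳) → ℝ) (r : ℕ) : Prop :=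
  ∃ g g' : Fin r → (Fin M → 𝒳) → ℝ, ∀ A B, y A B = ∑ i, g i A * g' i B

lemma hasSep_zero (r : ℕ) : HasSep (𝒳 := 𝒳) (M := M) (fun _ _ => 0) r :=
  ⟨fun _ _ => 0, fun _ _ => 0, by simp⟩

lemma hasSep_const (c : ℝ) : HasSep (𝒳 := 𝒳) (M := M) (fun _ _ => c) 1 :=
  ⟨fun _ _ => c, fun _ _ => 1, by simp⟩

lemma hasSep_add {y z : (Fin M → 𝒳) → (Fin M → 𝒳) → ℝ} {r s : ℕ}
    (hy : HasSep y r) (hz : HasSep z s) :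
    HasSep (fun A B => y A B + z A B) (r + s) := by
  obtain ⟨g1, g1', h1⟩ := hy
  obtain ⟨g2, g2', h2⟩ := hz
  refine ⟨Fin.append g1 g2, Fin.append g1' g2', fun A B => ?_⟩
  rw [Fin.sum_univ_add]
  simp only [Fin.append_left, Fin.append_right]
  rw [h1, h2]

lemma hasSep_mono {y : (Fin M → 𝒳) → (Fin M → 𝒳) → ℝ} {r r' : ℕ}
    (h : r ≤ r') (hy : HasSep y r) : HasSep y r' := by
  obtain ⟨k, rfl⟩ := Nat.exists_eq_add_of_le h
  have := hasSep_add hy (hasSep_zero (𝒳 := 𝒳) (M := M) k)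
  simpa using this

lemma hasSep_mul {y z : (Fin M → 𝒳) → (Fin M → 𝒳) → ℝ} {r s : ℕ}
    (hy : HasSep y r) (hz : HasSep z s) :
    HasSep (fun A B => y A B * z A B) (r * s) := by
  obtain ⟨g1, g1', h1⟩ := hy
  obtain ⟨g2, g2', h2⟩ := hz
  refine ⟨fun k A => g1 (finProdFinEquiv.symm k).1 A * g2 (finProdFinEquiv.symm k).2 A,
    fun k B => g1' (finProdFinEquiv.symm k).1 B * g2' (finProdFinEquiv.symm k).2 B,
    fun A B => ?_⟩
  have hsum : ∀ (G : Fin (r * s) → ℝ),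
      ∑ k, G k = ∑ p : Fin r × Fin s, G (finProdFinEquiv p) :=
    fun G => (Equiv.sum_comp finProdFinEquiv G).symm
  show y A B * z A B = _
  simp only []
  rw [h1, h2, Finset.sum_mul_sum, hsum]
  simp only [Equiv.symm_apply_apply]
  rw [Fintype.sum_prod_type]
  exact Finset.sum_congr rfl fun i _ => Finset.sum_congr rfl fun j _ => by ring

lemma hasSep_smul {y : (Fin M → 𝒳) → (Fin M → 𝒳) → ℝ} {r : ℕ} (c : ℝ)
    (hy : HasSep y r) : HasSep (fun A B => c * y A B) r := by
  have := hasSep_mul (hasSep_const (𝒳 := 𝒳) (M := M) c) hy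
  simpa using this

lemma hasSep_sum {ι : Type*} (s : Finset ι)
    (y : ι → (Fin M → 𝒳) → (Fin M → 𝒳) → ℝ) (r : ℕ)
    (h : ∀ k ∈ s, HasSep (y k) r) :
    HasSep (fun A B => ∑ k ∈ s, y k A B) (s.card * r) := by
  induction s using Finset.cons_induction with
  | empty => simpa using hasSep_zero (𝒳 := 𝒳) (M := M) 0
  | cons a s ha ih =>
    have h1 := h a (Finset.mem_cons_self a s)
    have h2 := ih fun k hk => h k (Finset.mem_cons_of_mem hk)
    have h3 := hasSep_add h1 h2
    simp only [Finset.sum_cons, Finset.card_cons]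
    exact hasSep_mono (le_of_eq (by ring)) h3

/-- All entries of the matrix-valued `f` admit separated decompositions with `r` terms. -/
def MHasSep (f : (Fin M → 𝒳) → (Fin M → 𝒳) → Matrix (Fin n) (Fin n) ℝ) (r : ℕ) : Prop :=
  ∀ i j, HasSep (fun A B => f A B i j) r

lemma mHasSep_mul {f g : (Fin M → 𝒳) → (Fin M → 𝒳) → Matrix (Fin n) (Fin n) ℝ} {r s : ℕ}
    (hf : MHasSep f r) (hg : MHasSep g s) :
    MHasSep (fun A B => f A B * g A B) (n * (r * s)) := by
  intro i j
  have he : (fun A B => (f A B * g A B) i j)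
      = fun A B => ∑ k : Fin n, f A B i k * g A B k j := by
    funext A B; rw [Matrix.mul_apply]
  rw [he]
  have := hasSep_sum Finset.univ (fun k A B => f A B i k * g A B k j) (r * s)
    (fun k _ => hasSep_mul (hf i k) (hg k j))
  simpa using this

lemma mHasSep_constMul (C : Matrix (Fin n) (Fin n) ℝ)
    {f : (Fin M → 𝒳) → (Fin M → 𝒳) → Matrix (Fin n) (Fin n) ℝ} {r : ℕ}
    (hf : MHasSep f r) :
    MHasSep (fun A B => C * f A B) (n * r) := by
  intro i j
  have he : (fun A B => (C * f A B) i j)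
      = fun A B => ∑ k : Fin n, C i k * f A B k j := by
    funext A B; rw [Matrix.mul_apply]
  rw [he]
  have := hasSep_sum Finset.univ (fun k A B => C i k * f A B k j) r
    (fun k _ => hasSep_smul (C i k) (hf k j))
  simpa using this

lemma mHasSep_prod (k : ℕ) :
    ∀ (W : Fin (k + 1) → Matrix (Fin n) (Fin n) ℝ)
      (f : (Fin M → 𝒳) → (Fin M → 𝒳) → Matrix (Fin n) (Fin n) ℝ) (r : ℕ),
      MHasSep f r →
      MHasSep (fun A B => (List.ofFn fun j : Fin (k + 1) => W j * f A B).prod)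
        ((n * r) * (n * (n * r)) ^ k) := by
  induction k with
  | zero =>
    intro W f r hf
    have he : (fun A B => (List.ofFn fun j : Fin 1 => W j * f A B).prod)
        = fun A B => W 0 * f A B := by
      funext A B; simp
    rw [he]
    simpa using mHasSep_constMul (W 0) hf
  | succ k ih =>
    intro W f r hf
    have hrest := ih (fun j => W j.succ) f r hf
    have hfirst : MHasSep (fun A B => W 0 * f A B) (n * r) := mHasSep_constMul (W 0) hf
    have hmul := mHasSep_mul hfirst hrest
    have he : (fun A B => (List.ofFn fun j : Fin (k + 2) => W j * f A B).prod)
        = fun A B => (W 0 * f A B) *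
            (List.ofFn fun j : Fin (k + 1) => W j.succ * f A B).prod := by
      funext A B; rw [List.ofFn_succ, List.prod_cons]
    rw [he]
    have hnum : (n * r) * (n * (n * r)) ^ (k + 1)
        = n * ((n * r) * ((n * r) * (n * (n * r)) ^ k)) := by ring
    rw [hnum]
    exact hmul

lemma sepRank_le_of_hasSep {y : (Fin M → 𝒳) → (Fin M → 𝒳) → ℝ} {r : ℕ}
    (h : HasSep y r) : sepRank y ≤ (r : ℕ∞) :=
  sInf_le ⟨r, rfl, h⟩

lemma hasSep_of_sepRank_le {y : (Fin M → 𝒳) → (Fin M → 𝒳) → ℝ} {r : ℕ}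
    (h : sepRank y ≤ (r : ℕ∞)) : HasSep y r := by
  have hlt : sepRank y < (r : ℕ∞) + 1 :=
    lt_of_le_of_lt h (by exact_mod_cast Nat.lt_succ_self r)
  rw [sepRank, sInf_lt_iff] at hlt
  obtain ⟨a, ⟨r', rfl, hg⟩, hlt⟩ := hlt
  have hr : r' ≤ r := by
    have : (r' : ℕ∞) < ((r + 1 : ℕ) : ℕ∞) := by exact_mod_cast hlt
    exact Nat.lt_succ_iff.mp (by exact_mod_cast this)
  exact hasSep_mono hr hg

lemma mHasSep_of_sepRankM_le {f : (Fin M → 𝒳) → (Fin M → 𝒳) → Matrix (Fin n) (Fin n) ℝ}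
    {r : ℕ} (h : sepRankM f ≤ (r : ℕ∞)) : MHasSep f r := fun i j =>
  hasSep_of_sepRank_le (le_trans (le_iSup₂ (f := fun i j => sepRank fun A B => f A B i j) i j) h)

lemma sepRankM_le_of_mHasSep {f : (Fin M → 𝒳) → (Fin M → 𝒳) → Matrix (Fin n) (Fin n) ℝ}
    {r : ℕ} (h : MHasSep f r) : sepRankM f ≤ (r : ℕ∞) :=
  iSup₂_le fun i j => sepRank_le_of_hasSep (h i j)

end Aux

/-- The recursive separation-rank bound through the layers. -/
def sBound (n d : ℕ) : ℕ → ℕ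
  | 0 => 2
  | (i + 1) => (n * sBound n d i) * (n * (n * sBound n d i)) ^ (d - 1)

lemma sBound_le (n k : ℕ) (hn : 1 ≤ n) :
    ∀ i, n ^ 3 * sBound n (k + 2) i ≤ (2 * n ^ 3) ^ ((k + 2) ^ i) := by
  intro i
  induction i with
  | zero => simp [sBound]; ring_nf; exact le_rfl
  | succ i ih =>
    have h1 : n ^ 3 * sBound n (k + 2) (i + 1)
        = n ^ (2 * k + 6) * (sBound n (k + 2) i) ^ (k + 2) := by
      show n ^ 3 * ((n * sBound n (k + 2) i) *
        (n * (n * sBound n (k + 2) i)) ^ (k + 2 - 1)) = _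
      have : k + 2 - 1 = k + 1 := rfl
      rw [this]; ring
    have h2 : n ^ (2 * k + 6) ≤ n ^ (3 * k + 6) :=
      Nat.pow_le_pow_right hn (by omega)
    calc n ^ 3 * sBound n (k + 2) (i + 1)
        = n ^ (2 * k + 6) * (sBound n (k + 2) i) ^ (k + 2) := h1
      _ ≤ n ^ (3 * k + 6) * (sBound n (k + 2) i) ^ (k + 2) :=
          Nat.mul_le_mul_right _ h2
      _ = (n ^ 3 * sBound n (k + 2) i) ^ (k + 2) := by ring
      _ ≤ ((2 * n ^ 3) ^ ((k + 2) ^ i)) ^ (k + 2) := Nat.pow_le_pow_left ih _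
      _ = (2 * n ^ 3) ^ ((k + 2) ^ i * (k + 2)) := (pow_mul _ _ _).symm
      _ = (2 * n ^ 3) ^ ((k + 2) ^ (i + 1)) := by rw [← pow_succ]

/-- separation-rank upper bound for a simple linear transformer
(Theorem D.2). `F i` is the function computed by the first `i` layers. -/
theorem sepRank_simple_transformer {𝒳 : Type*} {M n : ℕ} (p d : ℕ) (hd : 2 ≤ d)
    (W : ℕ → Fin d → Matrix (Fin n) (Fin n) ℝ)
    (F : ℕ → (Fin M → 𝒳) → (Fin M → 𝒳) → Matrix (Fin n) (Fin n) ℝ)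
    (h0 : sepRankM (F 0) ≤ 2)
    (hstep : ∀ i < p, F (i + 1) = fun A B => attnLayer d (W i) (F i A B)) :
    sepRankM (F p) ≤ (2 * (n : ℕ∞) ^ 3) ^ (d ^ p) := by
  obtain ⟨k, rfl⟩ : ∃ k, d = k + 2 := ⟨d - 2, by omega⟩
  -- Inductive claim: each F i has separated entries with sBound terms.
  have claim : ∀ i ≤ p, MHasSep (F i) (sBound n (k + 2) i) := by
    intro i hi
    induction i with
    | zero =>
      apply mHasSep_of_sepRankM_le
      exact_mod_cast h0
    | succ i ih =>
      have hih := ih (by omega)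
      rw [hstep i (by omega)]
      have := mHasSep_prod (k + 1) (W i) (F i) (sBound n (k + 2) i) hih
      have he : sBound n (k + 2) (i + 1)
          = (n * sBound n (k + 2) i) * (n * (n * sBound n (k + 2) i)) ^ (k + 1) := rfl
      rw [he]
      exact this
  have hFp := claim p le_rfl
  have h1 : sepRankM (F p) ≤ ((sBound n (k + 2) p : ℕ) : ℕ∞) :=
    sepRankM_le_of_mHasSep hFp
  rcases Nat.eq_zero_or_pos n with hn | hn
  · subst hn
    have : sepRankM (F p) = ⊥ := by
      rw [sepRankM]
      exact iSup_of_empty _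
    rw [this]
    exact bot_le
  · have h2 : sBound n (k + 2) p ≤ (2 * n ^ 3) ^ ((k + 2) ^ p) := by
      calc sBound n (k + 2) p ≤ n ^ 3 * sBound n (k + 2) p :=
            Nat.le_mul_of_pos_left _ (by positivity)
        _ ≤ (2 * n ^ 3) ^ ((k + 2) ^ p) := sBound_le n k hn p
    calc sepRankM (F p) ≤ ((sBound n (k + 2) p : ℕ) : ℕ∞) := h1
      _ ≤ (((2 * n ^ 3) ^ ((k + 2) ^ p) : ℕ) : ℕ∞) := by exact_mod_cast h2
      _ = (2 * (n : ℕ∞) ^ 3) ^ ((k + 2) ^ p) := by push_cast; ring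
end

section
/- Multi-head attention layer bound (Lemma lem227, simplified form): let n, m ≥ 2, H ≥ 1, d ≥ 1 be natural numbers, let W_O ∈ ℝ^{n×m} and W^{j,k} ∈ ℝ^{m×n} for j ∈ [d], k ∈ [H] be fixed matrices, for each (j, k) let T_{j,k} : ℝ^{m×m} → ℝ^{m×m} be either the identity or the transpose, and let c ∈ {0, 1}. For f : 𝒳^M × 𝒳^M → ℝ^{n×m} define (L ∘ f)(A, B) := W_O · ( Σ_{k=1}^{H} ∏_{j=1}^{d} T_{j,k}( W^{j,k} · f(A, B) ) ) + c · f(A, B). Then sep(L ∘ f) ≤ H · m^d · n^{d+1} · sep(f)^d. -/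
/-
Separation rank is subadditive under sums and submultiplicative under products, constants have
separation rank at most one, and transposition only permutes entries; since an entry of a matrix product
is a sum of `card κ` products of entries, entrywise decompositions propagate through the layer.
With `R = sep f`, each factor `W * f` has `n R` terms per entry, a product of `d` of them has
`m ^ (d - 1) (n R) ^ d`, and the output projection and the residual add a factor `m` and a summand
`R`. That summand is absorbed into the main term because `n ≥ 2`.
-/
open scoped BigOperators
open Matrix

/-- Apply either the identity (`b = false`) or the transpose (`b = true`). -/
def applyT {m : ℕ} (b : Bool) (X : Matrix (Fin m) (Fin m) ℝ) :
    Matrix (Fin m) (Fin m) ℝ :=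
  if b then Xᵀ else X

/-- A multi-head linear transformer layer with `H` heads and degree `d`:
sum over the heads a `d`-fold matrix product of linearly transformed (and
possibly transposed) copies of the input, apply an output matrix `W_O`,
and optionally add a residual copy of the input. -/
noncomputable def mhLayer {n m : ℕ} (H d : ℕ)
    (WO : Matrix (Fin n) (Fin m) ℝ)
    (W : Fin d → Fin H → Matrix (Fin m) (Fin n) ℝ)
    (T : Fin d → Fin H → Bool) (c : ℝ)
    (Y : Matrix (Fin n) (Fin m) ℝ) : Matrix (Fin n) (Fin m) ℝ :=
  WO * (∑ k : Fin H, (List.ofFn fun j : Fin d => applyT (T j k) (W j k * Y)).prod)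
    + c • Y

section SepDecomp

variable {α β 𝕜 : Type*} [CommSemiring 𝕜]

def HasSepDecomp (y : α → β → 𝕜) (r : ℕ) : Prop :=
  ∃ g : Fin r → α → 𝕜, ∃ g' : Fin r → β → 𝕜, ∀ a b, y a b = ∑ i, g i a * g' i b

namespace HasSepDecomp

variable {y z : α → β → 𝕜} {r s : ℕ}

theorem of_fintype {ι : Type*} [Fintype ι] (g : ι → α → 𝕜) (g' : ι → β → 𝕜)
    (h : ∀ a b, y a b = ∑ i, g i a * g' i b) : HasSepDecomp y (Fintype.card ι) := by
  let e := (Fintype.equivFin ι).symm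
  exact ⟨fun i => g (e i), fun i => g' (e i), fun a b => (h a b).trans
    (e.sum_comp fun i => g i a * g' i b).symm⟩

theorem mono (hy : HasSepDecomp y r) (hrs : r ≤ s) : HasSepDecomp y s := by
  obtain ⟨g, g', hg⟩ := hy
  have := of_fintype (y := y) (ι := Fin r ⊕ Fin (s - r)) (Sum.elim g 0) (Sum.elim g' 0)
    fun a b => by simp [hg a b]
  rwa [Fintype.card_sum, Fintype.card_fin, Fintype.card_fin, Nat.add_sub_cancel' hrs] at this

theorem const (c : 𝕜) : HasSepDecomp (fun (_ : α) (_ : β) => c) 1 :=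
  ⟨fun _ _ => c, fun _ _ => 1, fun _ _ => by simp⟩

theorem add (hy : HasSepDecomp y r) (hz : HasSepDecomp z s) :
    HasSepDecomp (fun a b => y a b + z a b) (r + s) := by
  obtain ⟨g, g', hg⟩ := hy
  obtain ⟨h, h', hh⟩ := hz
  simpa using of_fintype (ι := Fin r ⊕ Fin s) (Sum.elim g h) (Sum.elim g' h')
    fun a b => by simp [hg a b, hh a b]

theorem mul (hy : HasSepDecomp y r) (hz : HasSepDecomp z s) :
    HasSepDecomp (fun a b => y a b * z a b) (r * s) := by
  obtain ⟨g, g', hg⟩ := hy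
  obtain ⟨h, h', hh⟩ := hz
  simpa using of_fintype (ι := Fin r × Fin s) (fun p a => g p.1 a * h p.2 a)
    (fun p b => g' p.1 b * h' p.2 b) fun a b => by
      simp only [hg a b, hh a b, Finset.sum_mul_sum, Fintype.sum_prod_type]
      exact Finset.sum_congr rfl fun _ _ => Finset.sum_congr rfl fun _ _ => by ring

theorem sum {κ : Type*} [Fintype κ] {y : κ → α → β → 𝕜} (hy : ∀ k, HasSepDecomp (y k) r) :
    HasSepDecomp (fun a b => ∑ k, y k a b) (Fintype.card κ * r) := by
  choose g g' hg using hy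
  simpa using of_fintype (ι := κ × Fin r) (fun p => g p.1 p.2) (fun p => g' p.1 p.2)
    fun a b => by simp only [hg _ a b, Fintype.sum_prod_type]

end HasSepDecomp

def HasSepDecompM {ι κ : Type*} (F : α → β → Matrix ι κ 𝕜) (r : ℕ) : Prop :=
  ∀ i j, HasSepDecomp (fun a b => F a b i j) r

namespace HasSepDecompM

variable {ι κ μ : Type*} {r s : ℕ}

theorem mono {F : α → β → Matrix ι κ 𝕜} (hF : HasSepDecompM F r) (hrs : r ≤ s) :
    HasSepDecompM F s :=
  fun i j => (hF i j).mono hrs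

theorem const (C : Matrix ι κ 𝕜) : HasSepDecompM (fun (_ : α) (_ : β) => C) 1 :=
  fun i j => HasSepDecomp.const (C i j)

theorem add {F G : α → β → Matrix ι κ 𝕜} (hF : HasSepDecompM F r) (hG : HasSepDecompM G s) :
    HasSepDecompM (fun a b => F a b + G a b) (r + s) :=
  fun i j => (hF i j).add (hG i j)

theorem smul {F : α → β → Matrix ι κ 𝕜} (hF : HasSepDecompM F r) (c : 𝕜) :
    HasSepDecompM (fun a b => c • F a b) r := fun i j => by
  simpa using (HasSepDecomp.const c).mul (hF i j)

theorem transpose {F : α → β → Matrix ι κ 𝕜} (hF : HasSepDecompM F r) :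
    HasSepDecompM (fun a b => (F a b)ᵀ) r :=
  fun i j => hF j i

theorem sum {ν : Type*} [Fintype ν] {F : ν → α → β → Matrix ι κ 𝕜}
    (hF : ∀ k, HasSepDecompM (F k) r) :
    HasSepDecompM (fun a b => ∑ k, F k a b) (Fintype.card ν * r) := fun i j => by
  simpa [Matrix.sum_apply] using HasSepDecomp.sum fun k => hF k i j

theorem mul [Fintype κ] {F : α → β → Matrix ι κ 𝕜} {G : α → β → Matrix κ μ 𝕜}
    (hF : HasSepDecompM F r) (hG : HasSepDecompM G s) :
    HasSepDecompM (fun a b => F a b * G a b) (Fintype.card κ * (r * s)) := fun i j => by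
  simpa [Matrix.mul_apply] using HasSepDecomp.sum fun k => (hF i k).mul (hG k j)

theorem list_prod_ofFn [Fintype ι] [DecidableEq ι] {q : ℕ} :
    ∀ {d : ℕ} {Φ : Fin (d + 1) → α → β → Matrix ι ι 𝕜}, (∀ j, HasSepDecompM (Φ j) q) →
      HasSepDecompM (fun a b => (List.ofFn fun j => Φ j a b).prod)
        (Fintype.card ι ^ d * q ^ (d + 1))
  | 0, Φ, hΦ => by simpa using hΦ 0
  | d + 1, Φ, hΦ => by
    have := (hΦ 0).mul (list_prod_ofFn fun j => hΦ j.succ)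
    convert this using 1
    · funext a b
      rw [List.ofFn_succ, List.prod_cons]
    · ring

end HasSepDecompM

end SepDecomp

theorem HasSepDecompM.applyT {α β : Type*} {m r : ℕ}
    {F : α → β → Matrix (Fin m) (Fin m) ℝ} (hF : HasSepDecompM F r) (b : Bool) :
    HasSepDecompM (fun x y => applyT b (F x y)) r := by
  cases b
  · exact hF
  · exact hF.transpose

theorem HasSepDecompM.mhLayer {α β : Type*} {n m H d R : ℕ}
    {f : α → β → Matrix (Fin n) (Fin m) ℝ} (hf : HasSepDecompM f R)
    (WO : Matrix (Fin n) (Fin m) ℝ) (W : Fin (d + 1) → Fin H → Matrix (Fin m) (Fin n) ℝ)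
    (T : Fin (d + 1) → Fin H → Bool) (c : ℝ) :
    HasSepDecompM (fun a b => mhLayer H (d + 1) WO W T c (f a b))
      (m * (H * (m ^ d * (n * R) ^ (d + 1))) + R) := by
  have hheads := HasSepDecompM.sum fun k : Fin H => HasSepDecompM.list_prod_ofFn fun j =>
    ((HasSepDecompM.const (W j k)).mul hf).applyT (T j k)
  have hlayer := ((HasSepDecompM.const WO).mul hheads).add (hf.smul c)
  simp only [Fintype.card_fin, one_mul] at hlayer
  exact hlayer

theorem sepRank_le_coe_iff {𝒳 : Type*} {M : ℕ} {y : (Fin M → 𝒳) → (Fin M → 𝒳) → ℝ} {r : ℕ} :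
    sepRank y ≤ r ↔ HasSepDecomp y r := by
  refine ⟨fun h => ?_, fun h => sInf_le ⟨r, rfl, h⟩⟩
  change sInf {R : ℕ∞ | ∃ r : ℕ, R = r ∧ HasSepDecomp y r} ≤ r at h
  have hne : {R : ℕ∞ | ∃ r : ℕ, R = r ∧ HasSepDecomp y r}.Nonempty := by
    by_contra hemp
    simp [Set.not_nonempty_iff_eq_empty.1 hemp] at h
  obtain ⟨r', hr', hy⟩ := csInf_mem hne
  rw [hr', Nat.cast_le] at h
  exact hy.mono h

theorem sepRankM_le_coe_iff {𝒳 : Type*} {M n m : ℕ}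
    {f : (Fin M → 𝒳) → (Fin M → 𝒳) → Matrix (Fin n) (Fin m) ℝ} {r : ℕ} :
    sepRankM f ≤ r ↔ HasSepDecompM f r := by
  simp only [sepRankM, iSup₂_le_iff, sepRank_le_coe_iff, HasSepDecompM]

theorem mhLayer_sepDecomp_count_le {H m n d R : ℕ} (hH : 1 ≤ H) (hm : 1 ≤ m) (hn : 2 ≤ n) :
    m * (H * (m ^ d * (n * R) ^ (d + 1))) + R ≤ H * m ^ (d + 1) * n ^ (d + 2) * R ^ (d + 1) := by
  set X := H * m ^ (d + 1) * n ^ (d + 1) * R ^ (d + 1)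
  have hmain : m * (H * (m ^ d * (n * R) ^ (d + 1))) = X := by ring
  have hR : R ≤ X := calc
    R ≤ R ^ (d + 1) := Nat.le_self_pow d.succ_ne_zero R
    _ ≤ X := Nat.le_mul_of_pos_left _ (by positivity)
  have hnX : 2 * X ≤ H * m ^ (d + 1) * n ^ (d + 2) * R ^ (d + 1) := calc
    2 * X ≤ n * X := Nat.mul_le_mul_right X hn
    _ = _ := by ring
  omega

theorem sepRank_mhLayer_general {𝒳 : Type*} {M n m : ℕ} (H d : ℕ)
    (hn : 2 ≤ n) (hm : 2 ≤ m) (hH : 1 ≤ H) (hd : 1 ≤ d)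
    (WO : Matrix (Fin n) (Fin m) ℝ)
    (W : Fin d → Fin H → Matrix (Fin m) (Fin n) ℝ)
    (T : Fin d → Fin H → Bool) (c : ℝ)
    (f : (Fin M → 𝒳) → (Fin M → 𝒳) → Matrix (Fin n) (Fin m) ℝ) :
    sepRankM (fun A B => mhLayer H d WO W T c (f A B))
      ≤ (H : ℕ∞) * (m : ℕ∞) ^ d * (n : ℕ∞) ^ (d + 1) * sepRankM f ^ d := by
  obtain ⟨d, rfl⟩ : ∃ d', d = d' + 1 := ⟨d - 1, by omega⟩
  cases hf : sepRankM f using ENat.recTopCoe with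
  | top =>
    have hcoeff : (H : ℕ∞) * m ^ (d + 1) * n ^ (d + 1 + 1) ≠ 0 := by simp; omega
    simp [ENat.mul_top hcoeff]
  | coe R =>
    have hfR : HasSepDecompM f R := sepRankM_le_coe_iff.1 hf.le
    calc _ ≤ ((H * m ^ (d + 1) * n ^ (d + 2) * R ^ (d + 1) : ℕ) : ℕ∞) :=
          sepRankM_le_coe_iff.2 ((hfR.mhLayer WO W T c).mono
            (mhLayer_sepDecomp_count_le hH (by omega) hn))
      _ = _ := by push_cast; rfl

/-- multi-head attention layer bound (Lemma lem227, simplified form). -/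
theorem sepRank_mhLayer {𝒳 : Type*} {M n m : ℕ} (H d : ℕ)
    (hn : 2 ≤ n) (hm : 2 ≤ m) (hH : 1 ≤ H) (hd : 1 ≤ d)
    (WO : Matrix (Fin n) (Fin m) ℝ)
    (W : Fin d → Fin H → Matrix (Fin m) (Fin n) ℝ)
    (T : Fin d → Fin H → Bool) (c : ℝ) (hc : c = 0 ∨ c = 1)
    (f : (Fin M → 𝒳) → (Fin M → 𝒳) → Matrix (Fin n) (Fin m) ℝ) :
    sepRankM (fun A B => mhLayer H d WO W T c (f A B))
      ≤ (H : ℕ∞) * (m : ℕ∞) ^ d * (n : ℕ∞) ^ (d + 1) * sepRankM f ^ d :=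
  sepRank_mhLayer_general H d hn hm hH hd WO W T c f
end

section
/- Transformer separation-rank upper bound (Theorem 5.4): let n, m ≥ 2, H ≥ 1, let X₀ : 𝒳^M × 𝒳^M → ℝ^{n×m} satisfy sep(X₀) ≤ 2, and let L_1, …, L_p be multi-head layers of the form (L_i ∘ Y)(A,B) = W_O^{(i)} · ( Σ_{k=1}^{H} ∏_{j=1}^{3} T^{(i)}_{j,k}( W^{(i),j,k} · Y(A,B) ) ) + c_i · Y(A,B), where W_O^{(i)} ∈ ℝ^{n×m}, W^{(i),j,k} ∈ ℝ^{m×n}, each T^{(i)}_{j,k} is either the identity or the transpose on ℝ^{m×m}, and c_i ∈ {0, 1}. Then the depth-p composition T := L_p ∘ ⋯ ∘ L_1 ∘ X₀ satisfies sep(T) ≤ (2H·m²·n²)^{3^p}. -/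
open scoped BigOperators
open Matrix

section SepLE
variable {𝒳 : Type*} {M : ℕ}

def SepLE (y : (Fin M → 𝒳) → (Fin M → 𝒳) → ℝ) (r : ℕ) : Prop :=
  ∃ g g' : Fin r → (Fin M → 𝒳) → ℝ, ∀ A B, y A B = ∑ i, g i A * g' i B

lemma sepLE_congr {y z : (Fin M → 𝒳) → (Fin M → 𝒳) → ℝ} {r : ℕ}
    (h : ∀ A B, y A B = z A B) (hz : SepLE z r) : SepLE y r := by
  obtain ⟨g, g', hg⟩ := hz
  exact ⟨g, g', fun A B => (h A B).trans (hg A B)⟩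

lemma sepLE_of_fintype {ι : Type*} [Fintype ι] (y : (Fin M → 𝒳) → (Fin M → 𝒳) → ℝ)
    (g g' : ι → (Fin M → 𝒳) → ℝ) (h : ∀ A B, y A B = ∑ i, g i A * g' i B) :
    SepLE y (Fintype.card ι) := by
  refine ⟨fun i => g ((Fintype.equivFin ι).symm i), fun i => g' ((Fintype.equivFin ι).symm i),
    fun A B => ?_⟩
  rw [h A B, ← Equiv.sum_comp (Fintype.equivFin ι).symm (fun i => g i A * g' i B)]

lemma sepLE_add {y z : (Fin M → 𝒳) → (Fin M → 𝒳) → ℝ} {r s : ℕ}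
    (hy : SepLE y r) (hz : SepLE z s) : SepLE (fun A B => y A B + z A B) (r + s) := by
  obtain ⟨g, g', hg⟩ := hy
  obtain ⟨h, h', hh⟩ := hz
  refine ⟨Fin.append g h, Fin.append g' h', fun A B => ?_⟩
  rw [Fin.sum_univ_add]
  simp [Fin.append_left, Fin.append_right, hg A B, hh A B]

lemma sepLE_mono {y : (Fin M → 𝒳) → (Fin M → 𝒳) → ℝ} {r s : ℕ}
    (hy : SepLE y r) (hrs : r ≤ s) : SepLE y s := by
  have h0 : SepLE (fun _ _ : Fin M → 𝒳 => (0:ℝ)) (s - r) := ⟨0, 0, by simp⟩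
  have := sepLE_add hy h0
  rw [Nat.add_sub_cancel' hrs] at this
  exact sepLE_congr (fun A B => by simp) this

lemma sepLE_smul {y : (Fin M → 𝒳) → (Fin M → 𝒳) → ℝ} {r : ℕ} (a : ℝ)
    (hy : SepLE y r) : SepLE (fun A B => a * y A B) r := by
  obtain ⟨g, g', hg⟩ := hy
  exact ⟨fun i A => a * g i A, g', fun A B => by
    simp only [hg A B, Finset.mul_sum, mul_assoc]⟩

lemma sepLE_mul {y z : (Fin M → 𝒳) → (Fin M → 𝒳) → ℝ} {r s : ℕ}
    (hy : SepLE y r) (hz : SepLE z s) : SepLE (fun A B => y A B * z A B) (r * s) := by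
  obtain ⟨g, g', hg⟩ := hy
  obtain ⟨h, h', hh⟩ := hz
  have key : ∀ A B, y A B * z A B =
      ∑ q : Fin r × Fin s, (g q.1 A * h q.2 A) * (g' q.1 B * h' q.2 B) := by
    intro A B
    rw [hg A B, hh A B, Finset.sum_mul_sum, Fintype.sum_prod_type]
    exact Finset.sum_congr rfl fun i _ => Finset.sum_congr rfl fun j _ => by ring
  have := sepLE_of_fintype _ _ _ key
  simpa [Fintype.card_prod] using this

lemma sepLE_fintype_sum {ι : Type*} [Fintype ι]
    (y : ι → (Fin M → 𝒳) → (Fin M → 𝒳) → ℝ) (r : ℕ) (h : ∀ k, SepLE (y k) r) :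
    SepLE (fun A B => ∑ k, y k A B) (Fintype.card ι * r) := by
  choose g g' hg using h
  have key : ∀ A B, (∑ k, y k A B) = ∑ q : ι × Fin r, g q.1 q.2 A * g' q.1 q.2 B := by
    intro A B
    rw [Fintype.sum_prod_type]
    exact Finset.sum_congr rfl fun k _ => hg k A B
  have := sepLE_of_fintype _ _ _ key
  simpa [Fintype.card_prod] using this

lemma sepRank_le_of_sepLE {y : (Fin M → 𝒳) → (Fin M → 𝒳) → ℝ} {r : ℕ}
    (h : SepLE y r) : sepRank y ≤ (r : ℕ∞) := by
  obtain ⟨g, g', hg⟩ := h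
  exact sInf_le ⟨r, rfl, g, g', hg⟩

lemma sepLE_of_sepRank_le {y : (Fin M → 𝒳) → (Fin M → 𝒳) → ℝ} {r : ℕ}
    (h : sepRank y ≤ (r : ℕ∞)) : SepLE y r := by
  have hlt : sepRank y < ((r + 1 : ℕ) : ℕ∞) := lt_of_le_of_lt h (by exact_mod_cast lt_add_one r)
  rw [sepRank, sInf_lt_iff] at hlt
  obtain ⟨a, ⟨r', rfl, g, g', hg⟩, ha⟩ := hlt
  have : r' ≤ r := by exact_mod_cast Nat.lt_succ_iff.mp (by exact_mod_cast ha)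
  exact sepLE_mono ⟨g, g', hg⟩ this

end SepLE

lemma ofFn3_prod {m : ℕ} (g : Fin 3 → Matrix (Fin m) (Fin m) ℝ) :
    (List.ofFn g).prod = g 0 * (g 1 * g 2) := by
  simp [List.ofFn_succ]

section Layer
variable {𝒳 : Type*} {M n m : ℕ}

lemma sepLE_mhLayer {H : ℕ}
    (WO : Matrix (Fin n) (Fin m) ℝ)
    (W : Fin 3 → Fin H → Matrix (Fin m) (Fin n) ℝ)
    (T : Fin 3 → Fin H → Bool) (c : ℝ)
    (Y : (Fin M → 𝒳) → (Fin M → 𝒳) → Matrix (Fin n) (Fin m) ℝ) (R : ℕ)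
    (hY : ∀ a b, SepLE (fun A B => Y A B a b) R) (a : Fin n) (b : Fin m) :
    SepLE (fun A B => mhLayer H 3 WO W T c (Y A B) a b) (H * m ^ 3 * n ^ 3 * R ^ 3 + R) := by
  -- entries of a linearly transformed / possibly transposed copy
  have hA : ∀ (k : Fin H) (j : Fin 3) (x y : Fin m),
      SepLE (fun A B => applyT (T j k) (W j k * Y A B) x y) (n * R) := by
    intro k j x y
    have base : ∀ x y : Fin m, SepLE (fun A B => (W j k * Y A B) x y) (n * R) := by
      intro x y
      have h1 : SepLE (fun A B => ∑ w : Fin n, W j k x w * Y A B w y)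
          (Fintype.card (Fin n) * R) :=
        sepLE_fintype_sum _ R fun w => sepLE_smul _ (hY w y)
      rw [Fintype.card_fin] at h1
      exact sepLE_congr (fun A B => Matrix.mul_apply) h1
    cases hT : T j k with
    | false => simpa [applyT] using base x y
    | true => simpa [applyT, Matrix.transpose_apply] using base y x
  -- entries of the product of the last two factors
  have hB : ∀ (k : Fin H) (u b' : Fin m),
      SepLE (fun A B => ((applyT (T 1 k) (W 1 k * Y A B)) *
        (applyT (T 2 k) (W 2 k * Y A B))) u b') (m * (n * R * (n * R))) := by
    intro k u b'
    have h1 : SepLE (fun A B => ∑ v : Fin m,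
        applyT (T 1 k) (W 1 k * Y A B) u v * applyT (T 2 k) (W 2 k * Y A B) v b')
        (Fintype.card (Fin m) * (n * R * (n * R))) :=
      sepLE_fintype_sum _ _ fun v => sepLE_mul (hA k 1 u v) (hA k 2 v b')
    rw [Fintype.card_fin] at h1
    exact sepLE_congr (fun A B => Matrix.mul_apply) h1
  -- entries of the 3-fold product
  have hC : ∀ (k : Fin H) (s b' : Fin m),
      SepLE (fun A B => ((List.ofFn fun j : Fin 3 =>
        applyT (T j k) (W j k * Y A B)).prod) s b')
        (m * (n * R * (m * (n * R * (n * R))))) := by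
    intro k s b'
    have h1 : SepLE (fun A B => ∑ u : Fin m,
        applyT (T 0 k) (W 0 k * Y A B) s u *
          ((applyT (T 1 k) (W 1 k * Y A B)) * (applyT (T 2 k) (W 2 k * Y A B))) u b')
        (Fintype.card (Fin m) * (n * R * (m * (n * R * (n * R))))) :=
      sepLE_fintype_sum _ _ fun u => sepLE_mul (hA k 0 s u) (hB k u b')
    rw [Fintype.card_fin] at h1
    refine sepLE_congr (fun A B => ?_) h1
    rw [ofFn3_prod]
    exact Matrix.mul_apply
  -- entries of the sum over heads
  have hD : ∀ (s : Fin m) (b' : Fin m),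
      SepLE (fun A B => (∑ k : Fin H, (List.ofFn fun j : Fin 3 =>
        applyT (T j k) (W j k * Y A B)).prod) s b')
        (H * (m * (n * R * (m * (n * R * (n * R)))))) := by
    intro s b'
    have h1 := sepLE_fintype_sum
      (fun k A B => ((List.ofFn fun j : Fin 3 =>
        applyT (T j k) (W j k * Y A B)).prod) s b') _ (fun k => hC k s b')
    rw [Fintype.card_fin] at h1
    exact sepLE_congr (fun A B => Matrix.sum_apply _ _ _ _) h1
  -- entry of WO * S
  have hE : SepLE (fun A B => (WO * (∑ k : Fin H, (List.ofFn fun j : Fin 3 =>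
        applyT (T j k) (W j k * Y A B)).prod)) a b)
      (m * (H * (m * (n * R * (m * (n * R * (n * R))))))) := by
    have h1 : SepLE (fun A B => ∑ s : Fin m, WO a s *
        (∑ k : Fin H, (List.ofFn fun j : Fin 3 =>
          applyT (T j k) (W j k * Y A B)).prod) s b)
        (Fintype.card (Fin m) * (H * (m * (n * R * (m * (n * R * (n * R))))))) :=
      sepLE_fintype_sum _ _ fun s => sepLE_smul _ (hD s b)
    rw [Fintype.card_fin] at h1
    exact sepLE_congr (fun A B => Matrix.mul_apply) h1
  have hRes : SepLE (fun A B => (c • Y A B) a b) R := by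
    refine sepLE_congr (fun A B => ?_) (sepLE_smul c (hY a b))
    simp [Matrix.smul_apply]
  have hFull := sepLE_add hE hRes
  refine sepLE_mono (sepLE_congr (fun A B => ?_) hFull) ?_
  · simp [mhLayer, Matrix.add_apply]
  · exact Nat.le_of_eq (by ring)

end Layer

def Rseq (C : ℕ) : ℕ → ℕ
  | 0 => 2
  | (i + 1) => C * (Rseq C i) ^ 3 + Rseq C i

lemma one_le_Rseq (C i : ℕ) : 1 ≤ Rseq C i := by
  induction i with
  | zero => simp [Rseq]
  | succ i ih => exact le_trans ih (by simp only [Rseq]; omega)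

lemma Rseq_sq_bound {C K : ℕ} (hCK : (C + 1) * 4 ≤ K ^ 2) :
    ∀ i, (C + 1) * (Rseq C i) ^ 2 ≤ K ^ (2 * 3 ^ i) := by
  intro i
  induction i with
  | zero => simpa [Rseq] using hCK
  | succ i ih =>
    set R := Rseq C i with hR
    have hR1 : 1 ≤ R := one_le_Rseq C i
    have h1 : Rseq C (i + 1) ≤ (C + 1) * R ^ 3 := by
      have : R ≤ R ^ 3 := Nat.le_self_pow (by norm_num) R
      calc Rseq C (i + 1) = C * R ^ 3 + R := rfl
        _ ≤ C * R ^ 3 + R ^ 3 := by omega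
        _ = (C + 1) * R ^ 3 := by ring
    calc (C + 1) * (Rseq C (i + 1)) ^ 2
        ≤ (C + 1) * ((C + 1) * R ^ 3) ^ 2 :=
          Nat.mul_le_mul_left _ (Nat.pow_le_pow_left h1 2)
      _ = ((C + 1) * R ^ 2) ^ 3 := by ring
      _ ≤ (K ^ (2 * 3 ^ i)) ^ 3 := Nat.pow_le_pow_left ih 3
      _ = K ^ (2 * 3 ^ (i + 1)) := by rw [← pow_mul]; ring_nf

lemma Rseq_le {C K : ℕ} (hCK : (C + 1) * 4 ≤ K ^ 2) (p : ℕ) :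
    Rseq C p ≤ K ^ 3 ^ p := by
  have h := Rseq_sq_bound hCK p
  have h2 : (Rseq C p) ^ 2 ≤ (K ^ 3 ^ p) ^ 2 := by
    calc (Rseq C p) ^ 2 ≤ (C + 1) * (Rseq C p) ^ 2 := Nat.le_mul_of_pos_left _ (by omega)
      _ ≤ K ^ (2 * 3 ^ p) := h
      _ = (K ^ 3 ^ p) ^ 2 := by rw [← pow_mul]; ring_nf
  exact (Nat.pow_le_pow_iff_left (by norm_num)).mp h2

/-- transformer separation-rank upper bound (Theorem 5.4).
`F i` is the function computed by the first `i` layers. -/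
theorem sepRank_transformer {𝒳 : Type*} {M n m : ℕ} (p H : ℕ)
    (hn : 2 ≤ n) (hm : 2 ≤ m) (hH : 1 ≤ H)
    (WO : ℕ → Matrix (Fin n) (Fin m) ℝ)
    (W : ℕ → Fin 3 → Fin H → Matrix (Fin m) (Fin n) ℝ)
    (T : ℕ → Fin 3 → Fin H → Bool)
    (c : ℕ → ℝ) (hc : ∀ i, c i = 0 ∨ c i = 1)
    (F : ℕ → (Fin M → 𝒳) → (Fin M → 𝒳) → Matrix (Fin n) (Fin m) ℝ)
    (h0 : sepRankM (F 0) ≤ 2)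
    (hstep : ∀ i < p,
      F (i + 1) = fun A B => mhLayer H 3 (WO i) (W i) (T i) (c i) (F i A B)) :
    sepRankM (F p) ≤ (2 * (H : ℕ∞) * (m : ℕ∞) ^ 2 * (n : ℕ∞) ^ 2) ^ (3 ^ p) := by
  set C : ℕ := H * m ^ 3 * n ^ 3 with hC
  set K : ℕ := 2 * H * m ^ 2 * n ^ 2 with hK
  -- base-case inequality for the arithmetic lemma
  have hCK : (C + 1) * 4 ≤ K ^ 2 := by
    have h4 : 2 ≤ H * m * n := by
      calc 2 ≤ 1 * 2 * 1 := by norm_num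
        _ ≤ H * m * n := by
          exact Nat.mul_le_mul (Nat.mul_le_mul hH hm) (le_trans (by norm_num) hn)
    have h1 : 1 ≤ C := by
      have : 1 * 1 * 1 ≤ H * m ^ 3 * n ^ 3 := by
        refine Nat.mul_le_mul (Nat.mul_le_mul hH ?_) ?_ <;>
          exact Nat.one_le_pow _ _ (by omega)
      simpa [hC] using this
    have e : K ^ 2 = C * (H * m * n) * 4 := by rw [hK, hC]; ring
    calc (C + 1) * 4 ≤ (C + C) * 4 := by omega
      _ = C * 2 * 4 := by ring
      _ ≤ C * (H * m * n) * 4 := by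
        exact Nat.mul_le_mul_right _ (Nat.mul_le_mul_left _ h4)
      _ = K ^ 2 := e.symm
  -- main induction: every entry of F i has SepLE bound Rseq C i
  have key : ∀ i, i ≤ p → ∀ (a : Fin n) (b : Fin m),
      SepLE (fun A B => F i A B a b) (Rseq C i) := by
    intro i
    induction i with
    | zero =>
      intro _ a b
      have h1 : sepRank (fun A B => F 0 A B a b) ≤ sepRankM (F 0) := by
        rw [sepRankM]
        exact le_iSup_of_le a (le_iSup_of_le b le_rfl)
      have h2 : sepRank (fun A B => F 0 A B a b) ≤ ((2 : ℕ) : ℕ∞) := by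
        exact_mod_cast le_trans h1 h0
      exact sepLE_of_sepRank_le h2
    | succ i ih =>
      intro hip a b
      have hi : i < p := Nat.lt_of_succ_le hip
      have ihe := ih (le_of_lt hi)
      rw [hstep i hi]
      have := sepLE_mhLayer (WO i) (W i) (T i) (c i) (F i) (Rseq C i) ihe a b
      exact sepLE_mono this (by rw [Rseq, hC])
  -- conclude
  have hfin : sepRankM (F p) ≤ ((K ^ 3 ^ p : ℕ) : ℕ∞) := by
    rw [sepRankM]
    refine iSup_le fun a => iSup_le fun b => ?_
    have h1 := sepRank_le_of_sepLE (key p le_rfl a b)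
    refine le_trans h1 ?_
    exact_mod_cast Rseq_le hCK p
  refine le_trans hfin ?_
  rw [hK]
  push_cast
  exact le_refl _
end

section
/- Expressivity-gap inequality (core of Conclusion 5.7, Case 1): for every natural number p ≥ 13 and real numbers m ≥ 9, H, n with 1 ≤ H ≤ m/2 and 1 ≤ n ≤ m², the inequality 2^p · log₃(2·H·m²·n²) ≤ 3^{p−2} · log₃(m − H) holds. (The left side dominates the log-separation-rank upper bound of a depth-p squared-activation mlp-based architecture, while the right side is a lower bound on the log-separation-rank of a depth-p attention architecture for some weight assignment.) -/
/-!
Since `2H ≤ m` and `n ≤ m²`, the argument of the left logarithm is at most `m⁷`; since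
`H ≤ m/2` and `m ≥ 4`, we have `m ≤ (m/2)² ≤ (m - H)²`. Hence, with `L = log₃ (m - H) ≥ 0`,
the left side is at most `2^p · 7 · log₃ m ≤ 14 · 2^p · L`, and `14 · 2^p ≤ 3^(p-2)` once `p ≥ 13`.
-/

open Real

theorem Real.logb_le_mul_logb_of_le_pow {b x y : ℝ} {k : ℕ} (hb : 1 < b) (hx : 0 < x)
    (hxy : x ≤ y ^ k) : logb b x ≤ k * logb b y := by
  rw [← logb_pow]
  exact logb_le_logb_of_le hb hx hxy

theorem fourteen_mul_two_pow_le_three_pow_sub_two {p : ℕ} (hp : 13 ≤ p) :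
    14 * 2 ^ p ≤ 3 ^ (p - 2) := by
  induction p, hp using Nat.le_induction with
  | base => norm_num
  | succ p hp ih =>
    rw [show p + 1 - 2 = p - 2 + 1 by omega, pow_succ, pow_succ]
    omega

theorem two_mul_mul_sq_mul_sq_le_pow_seven {m H n : ℝ} (hH : 0 ≤ H) (hHm : 2 * H ≤ m)
    (hn : 0 ≤ n) (hnm : n ≤ m ^ 2) : 2 * H * m ^ 2 * n ^ 2 ≤ m ^ 7 := by
  have hm : 0 ≤ m := by linarith
  calc 2 * H * m ^ 2 * n ^ 2 ≤ m * m ^ 2 * (m ^ 2) ^ 2 := by gcongr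
    _ = m ^ 7 := by ring

/-- expressivity-gap inequality (core of Conclusion 5.7, Case 1). -/
theorem expressivity_gap (p : ℕ) (hp : 13 ≤ p) (m H n : ℝ) (hm : 9 ≤ m)
    (hH1 : 1 ≤ H) (hH2 : H ≤ m / 2) (hn1 : 1 ≤ n) (hn2 : n ≤ m ^ 2) :
    (2 : ℝ) ^ p * Real.logb 3 (2 * H * m ^ 2 * n ^ 2)
      ≤ 3 ^ (p - 2) * Real.logb 3 (m - H) := by
  have hlhs : logb 3 (2 * H * m ^ 2 * n ^ 2) ≤ 7 * logb 3 m := by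
    simpa using logb_le_mul_logb_of_le_pow (k := 7) (by norm_num) (by positivity)
      (two_mul_mul_sq_mul_sq_le_pow_seven (by linarith) (by linarith) (by linarith) hn2)
  have hm_le : logb 3 m ≤ 2 * logb 3 (m - H) := by
    simpa using logb_le_mul_logb_of_le_pow (k := 2) (by norm_num) (by linarith)
      (show m ≤ (m - H) ^ 2 by nlinarith)
  have hpow : (14 : ℝ) * 2 ^ p ≤ 3 ^ (p - 2) := by
    exact_mod_cast fourteen_mul_two_pow_le_three_pow_sub_two hp
  have hL : 0 ≤ logb 3 (m - H) := logb_nonneg (by norm_num) (by linarith)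
  calc (2 : ℝ) ^ p * logb 3 (2 * H * m ^ 2 * n ^ 2)
      ≤ 2 ^ p * (7 * (2 * logb 3 (m - H))) := by gcongr; linarith
    _ = 14 * 2 ^ p * logb 3 (m - H) := by ring
    _ ≤ 3 ^ (p - 2) * logb 3 (m - H) := by gcongr
end

section
/- Monotonicity underlying the optimal depth-to-width ratio for transformers (core of Theorem thm_986): for every real D > 0, the function p ↦ 3^p · ln(D/p) is strictly increasing on the set {p ∈ ℝ : 1 ≤ p and 4p ≤ D}. (Here D = p·d² encodes a fixed parameter budget and the constraint 4p ≤ D corresponds to width d ≥ 2, so within the depth-efficiency regime increasing the depth p strictly increases the separation-rank exponent 3^p·log d.) -/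
/-!
The derivative of `p ↦ a ^ p * log (D / p)` is `a ^ p * (log a * log (D / p) - p⁻¹)`.
For `a ≥ e` and `1 < p < D / e` we have `log a ≥ 1`, `log (D / p) > 1` and `p⁻¹ < 1`,
so the function is strictly increasing on `[1, D / e]`, which contains the constraint set
because `e < 4`.
-/

open Real Set

theorem hasDerivAt_rpow_mul_log_div {a D x : ℝ} (ha : 0 < a) (hD : D ≠ 0) (hx : 0 < x) :
    HasDerivAt (fun p => a ^ p * log (D / p)) (a ^ x * (log a * log (D / x) - x⁻¹)) x := by
  have hquot : HasDerivAt (fun p => D / p) (-D / x ^ 2) x := by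
    simpa [Pi.div_def] using (hasDerivAt_const x D).div (hasDerivAt_id x) hx.ne'
  refine ((hasStrictDerivAt_const_rpow ha x).hasDerivAt.mul
    (hquot.log (div_ne_zero hD hx.ne'))).congr_deriv ?_
  field_simp
  ring

theorem strictMonoOn_rpow_mul_log_div {a : ℝ} (ha : exp 1 ≤ a) (D : ℝ) :
    StrictMonoOn (fun p => a ^ p * log (D / p)) (Icc 1 (D / exp 1)) := by
  have ha₀ : 0 < a := (exp_pos 1).trans_le ha
  have hderiv {x : ℝ} (hx : x ∈ Icc 1 (D / exp 1)) :
      HasDerivAt (fun p => a ^ p * log (D / p)) (a ^ x * (log a * log (D / x) - x⁻¹)) x := by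
    have hD : 0 < D := by
      have h := hx.1.trans hx.2
      rw [le_div_iff₀ (exp_pos 1), one_mul] at h
      exact (exp_pos 1).trans_le h
    exact hasDerivAt_rpow_mul_log_div ha₀ hD.ne' (by linarith [hx.1])
  refine strictMonoOn_of_deriv_pos (convex_Icc _ _)
    (fun x hx => (hderiv hx).continuousAt.continuousWithinAt) fun x hx => ?_
  rw [(hderiv (interior_subset hx)).deriv]
  rw [interior_Icc] at hx
  have hx₀ : 0 < x := by linarith [hx.1]
  have hlog_a : 1 ≤ log a := by simpa using log_le_log (exp_pos 1) ha
  have hlog_Dx : 1 < log (D / x) := by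
    have hDx : exp 1 < D / x := by
      rw [lt_div_iff₀ hx₀, mul_comm, ← lt_div_iff₀ (exp_pos 1)]
      exact hx.2
    simpa using log_lt_log (exp_pos 1) hDx
  have hinv : x⁻¹ < 1 := inv_lt_one_of_one_lt₀ hx.1
  exact mul_pos (rpow_pos_of_pos ha₀ x) (by nlinarith)

theorem depth_width_monotone_general (D : ℝ) :
    StrictMonoOn (fun p : ℝ => (3 : ℝ) ^ p * Real.log (D / p))
      {p : ℝ | 1 ≤ p ∧ 4 * p ≤ D} := by
  have he : exp 1 < 3 := exp_one_lt_d9.trans (by norm_num)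
  refine (strictMonoOn_rpow_mul_log_div he.le D).mono fun p ⟨hp, hpD⟩ => ⟨hp, ?_⟩
  rw [le_div_iff₀ (exp_pos 1)]
  nlinarith

/-- monotonicity underlying the optimal depth-to-width ratio for
transformers (core of Theorem thm_986). -/
theorem depth_width_monotone (D : ℝ) (hD : 0 < D) :
    StrictMonoOn (fun p : ℝ => (3 : ℝ) ^ p * Real.log (D / p))
      {p : ℝ | 1 ≤ p ∧ 4 * p ≤ D} :=
  depth_width_monotone_general D
end
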